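/- arXiv:1303.1019 — 4 statements merged into one kernel-verified Lean document; each statement's English description precedes it below -/
import Mathlib

section
/- If an r×r matrix Laurent polynomial A(z) satisfies the orthogonality condition A^♯(z)A(z) + A^♯(−z)A(−z) = 4I on the unit circle, and A(z) and A(−z) commute for all z on the unit circle, then B(z) := z A^♯(−z) satisfies both A^♯(z)B(z) + A^♯(−z)B(−z) = 0 and B^♯(z)B(z) + B^♯(−z)B(−z) = 4I on the unit circle. -/
/-! On the unit circle `A^♯(z) = A(z)ᴴ`. With `X = A(z)` and `Y = A(-z)` the hypotheses say that
`X` and `Y` commute and `XᴴX + YᴴY = 4`; the first claim then only needs `XᴴYᴴ = YᴴXᴴ`, and the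
second one is the row condition `XXᴴ + YYᴴ = 4`.

The row condition is proved by induction on the dimension. Let `u` be a unit common eigenvector
of `Xᴴ` and `Yᴴ`, with eigenvalues `a`, `b`. Then `u^⊥` is invariant under `X` and `Y`, and by
induction the row condition holds there. Both conditions on `u^⊥` make the block operator
`[[X, -Yᴴ], [Y, Xᴴ]]` twice a unitary (in finite dimension a left inverse is a right inverse).
Writing `Xu = conj a • u + x`, `Yu = conj b • u + y` with `x, y ∈ u^⊥`, this gives
`‖conj a • y - conj b • x‖² = 4 (‖x‖² + ‖y‖²)`, while `|a|² + |b|² + ‖x‖² + ‖y‖² = 4`; by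
Cauchy–Schwarz `x = y = 0`. So `u` reduces `X` and `Y`, and the row condition extends from
`u^⊥` to the whole space.
-/

open Matrix Finset MeasureTheory

/-- Evaluation of the symbol `A(z) = ∑_j A_j z^j` of a finitely supported real matrix mask. -/
noncomputable def mSymbol {r : ℕ} (A : ℤ →₀ Matrix (Fin r) (Fin r) ℝ) (z : ℂ) :
    Matrix (Fin r) (Fin r) ℂ :=
  ∑ j ∈ A.support, z ^ j • (A j).map (Complex.ofReal)

/-- `A^♯(z) = A(z⁻¹)ᵀ`. -/
noncomputable def mSharp {r : ℕ} (A : ℤ →₀ Matrix (Fin r) (Fin r) ℝ) (z : ℂ) :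
    Matrix (Fin r) (Fin r) ℂ :=
  (mSymbol A z⁻¹)ᵀ

/-- The subsymbol `A_ε(z) = ∑_j A_{ε+2j} z^j`. -/
noncomputable def mSub {r : ℕ} (A : ℤ →₀ Matrix (Fin r) (Fin r) ℝ) (ε : ℤ) (z : ℂ) :
    Matrix (Fin r) (Fin r) ℂ :=
  ∑ m ∈ A.support, if m % 2 = ε % 2 then z ^ ((m - ε) / 2) • (A m).map (Complex.ofReal) else 0

open scoped InnerProductSpace ComplexConjugate

theorem eq_zero_of_norm_smul_sub_smul_sq {𝕜 E : Type*} [NormedField 𝕜] [NormedAddCommGroup E]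
    [NormedSpace 𝕜 E] {α β : 𝕜} {x y : E} {c : ℝ}
    (hsum : ‖α‖ ^ 2 + ‖β‖ ^ 2 + ‖x‖ ^ 2 + ‖y‖ ^ 2 = c)
    (h : ‖α • y - β • x‖ ^ 2 = c * (‖x‖ ^ 2 + ‖y‖ ^ 2)) : x = 0 ∧ y = 0 := by
  have hle : ‖α • y - β • x‖ ≤ ‖α‖ * ‖y‖ + ‖β‖ * ‖x‖ :=
    (norm_sub_le _ _).trans_eq (by rw [norm_smul, norm_smul])
  have hsq : (‖x‖ ^ 2 + ‖y‖ ^ 2) ^ 2 ≤ 0 := by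
    nlinarith [norm_nonneg (α • y - β • x), norm_nonneg α, norm_nonneg β, norm_nonneg x,
      norm_nonneg y, sq_nonneg (‖α‖ * ‖x‖ - ‖β‖ * ‖y‖)]
  have h0 : ‖x‖ ^ 2 + ‖y‖ ^ 2 = 0 :=
    (pow_eq_zero_iff two_ne_zero).mp (le_antisymm hsq (sq_nonneg _))
  simpa using (add_eq_zero_iff_of_nonneg (sq_nonneg _) (sq_nonneg _)).mp h0

theorem Module.End.exists_hasEigenvector_of_commute {K V : Type*} [Field K] [IsAlgClosed K]
    [AddCommGroup V] [Module K V] [FiniteDimensional K V] [Nontrivial V] {f g : Module.End K V}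
    (h : Commute f g) : ∃ a b v, f.HasEigenvector a v ∧ g.HasEigenvector b v := by
  obtain ⟨a, ha⟩ := f.exists_eigenvalue
  have hg : Set.MapsTo g (f.eigenspace a) (f.eigenspace a) := mapsTo_genEigenspace_of_comm h a 1
  have : Nontrivial (f.eigenspace a) := Submodule.nontrivial_iff_ne_bot.mpr ha
  obtain ⟨b, hb⟩ := Module.End.exists_eigenvalue (g.restrict hg)
  obtain ⟨w, hw⟩ := hb.exists_hasEigenvector
  refine ⟨a, b, w, ⟨w.2, by simpa using hw.2⟩, ?_, by simpa using hw.2⟩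
  exact mem_eigenspace_iff.mpr (congrArg Subtype.val (mem_eigenspace_iff.mp hw.1))

theorem Module.End.mul_add_mul_eq_smul_one_and_commute {K V : Type*} [Field K] [AddCommGroup V]
    [Module K V] [FiniteDimensional K V] {X Y X' Y' : Module.End K V} {c : K} (hc : c ≠ 0)
    (hXY : Commute X Y) (hXY' : Commute X' Y') (hcol : X' * X + Y' * Y = c • 1)
    (hrow : X * X' + Y * Y' = c • 1) : X * X' + Y' * Y = c • 1 ∧ Commute X Y' := by
  -- The conclusions are the first-row blocks of `Q * Q' = c • 1`, which follows from
  -- `Q' * Q = c • 1` since `V × V` is finite-dimensional.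
  let Q : Module.End K (V × V) :=
    (X ∘ₗ .fst K V V - Y' ∘ₗ .snd K V V).prod (Y ∘ₗ .fst K V V + X' ∘ₗ .snd K V V)
  let Q' : Module.End K (V × V) :=
    (X' ∘ₗ .fst K V V + Y' ∘ₗ .snd K V V).prod (X ∘ₗ .snd K V V - Y ∘ₗ .fst K V V)
  have hQ'Q : (c⁻¹ • Q') * Q = 1 := by
    refine LinearMap.ext fun ⟨a, b⟩ => ?_
    have h1 := LinearMap.congr_fun hcol a
    have h2 := LinearMap.congr_fun hrow b
    have h3 := LinearMap.congr_fun hXY'.eq b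
    have h4 := LinearMap.congr_fun hXY.eq a
    simp only [mul_apply, LinearMap.add_apply, LinearMap.smul_apply, one_apply] at h1 h2 h3 h4
    simp only [Q, Q', smul_mul_assoc, LinearMap.smul_apply, mul_apply, LinearMap.coe_prod,
      Function.prod_apply, LinearMap.comp_apply, LinearMap.sub_apply, LinearMap.add_apply, LinearMap.fst_apply,
      LinearMap.snd_apply, map_sub, map_add, one_apply, Prod.smul_mk, Prod.mk.injEq]
    constructor <;> rw [inv_smul_eq_iff₀ hc]
    · rw [← h1, h3]; abel
    · rw [← h2, h4]; abel
  have hQQ' := LinearMap.congr_fun (mul_eq_one_comm.mp hQ'Q)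
  constructor
  · ext a
    have h := congrArg Prod.fst (hQQ' (a, 0))
    simp only [Algebra.mul_smul_comm, LinearMap.smul_apply, mul_apply, LinearMap.prod_apply,
      Function.prod_apply, LinearMap.add_apply, LinearMap.coe_comp, LinearMap.coe_fst,
      Function.comp_apply, LinearMap.coe_snd, map_zero, add_zero, LinearMap.sub_apply, zero_sub,
      map_neg, sub_neg_eq_add, Prod.smul_mk, smul_add, smul_neg, one_apply, Q, Q'] at h
    rw [← smul_add, inv_smul_eq_iff₀ hc] at h
    simpa using h
  · ext b
    have h := congrArg Prod.fst (hQQ' (0, b))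
    simpa [Q, Q', hc, sub_eq_zero] using h

namespace LinearMap
variable {𝕜 E : Type*} [RCLike 𝕜] [NormedAddCommGroup E] [InnerProductSpace 𝕜 E]
  [FiniteDimensional 𝕜 E]

theorem star_mul_add_star_mul_eq_smul_one_iff {X Y : Module.End 𝕜 E} {c : 𝕜} :
    star X * X + star Y * Y = c • 1 ↔ ∀ v w, ⟪X v, X w⟫_𝕜 + ⟪Y v, Y w⟫_𝕜 = c * ⟪v, w⟫_𝕜 := by
  have key : ∀ v w, ⟪v, (star X * X + star Y * Y) w⟫_𝕜 = ⟪X v, X w⟫_𝕜 + ⟪Y v, Y w⟫_𝕜 := by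
    intro v w
    rw [add_apply, inner_add_right, Module.End.mul_apply, Module.End.mul_apply, star_eq_adjoint,
      star_eq_adjoint, adjoint_inner_right, adjoint_inner_right]
  constructor
  · intro h v w
    rw [← key, h, smul_apply, Module.End.one_apply, inner_smul_right]
  · intro h
    ext w
    refine ext_inner_left 𝕜 fun v => ?_
    rw [key, h, smul_apply, Module.End.one_apply, inner_smul_right]

theorem norm_sq_apply_add_norm_sq_apply_eq {X Y : Module.End 𝕜 E} {c : ℝ}
    (h : star X * X + star Y * Y = (c : 𝕜) • 1) (v : E) :
    ‖X v‖ ^ 2 + ‖Y v‖ ^ 2 = c * ‖v‖ ^ 2 := by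
  have hv := star_mul_add_star_mul_eq_smul_one_iff.mp h v v
  simp only [inner_self_eq_norm_sq_to_K] at hv
  exact_mod_cast hv

theorem star_restrict_mul_add_star_restrict_mul {X Y : Module.End 𝕜 E} {c : 𝕜}
    {K : Submodule 𝕜 E} (hX : ∀ x ∈ K, X x ∈ K) (hY : ∀ x ∈ K, Y x ∈ K)
    (h : star X * X + star Y * Y = c • 1) :
    star (X.restrict hX) * X.restrict hX + star (Y.restrict hY) * Y.restrict hY = c • 1 :=
  star_mul_add_star_mul_eq_smul_one_iff.mpr fun v w =>
    star_mul_add_star_mul_eq_smul_one_iff.mp h v w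

theorem mapsTo_orthogonal_span_singleton {T : Module.End 𝕜 E} {u : E} {a : 𝕜}
    (h : star T u = a • u) : ∀ w ∈ (𝕜 ∙ u)ᗮ, T w ∈ (𝕜 ∙ u)ᗮ := by
  intro w hw
  rw [Submodule.mem_orthogonal_singleton_iff_inner_right] at hw ⊢
  rw [← adjoint_inner_left, ← star_eq_adjoint, h, inner_smul_left, hw, mul_zero]

theorem star_restrict {T : Module.End 𝕜 E} {K : Submodule 𝕜 E} (hT : ∀ x ∈ K, T x ∈ K)
    (hT' : ∀ x ∈ K, star T x ∈ K) : star (T.restrict hT) = (star T).restrict hT' := by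
  rw [star_eq_adjoint, eq_comm, eq_adjoint_iff]
  intro x y
  simp only [Submodule.coe_inner, coe_restrict_apply, star_eq_adjoint, adjoint_inner_left]

theorem norm_sq_star_add_star_add_norm_sq_sub {X Y : Module.End 𝕜 E} (hXY : Commute X Y)
    {c : ℝ} (hc : c ≠ 0) (hcol : star X * X + star Y * Y = (c : 𝕜) • 1)
    (hrow : X * star X + Y * star Y = (c : 𝕜) • 1)
    (x y : E) : ‖star X x + star Y y‖ ^ 2 + ‖X y - Y x‖ ^ 2 = c * (‖x‖ ^ 2 + ‖y‖ ^ 2) := by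
  have hc' : (c : 𝕜) ≠ 0 := by exact_mod_cast hc
  obtain ⟨h1, h2⟩ := Module.End.mul_add_mul_eq_smul_one_and_commute hc' hXY hXY.star_star hcol hrow
  obtain ⟨h3, h4⟩ := Module.End.mul_add_mul_eq_smul_one_and_commute hc' hXY.symm
    hXY.star_star.symm (by rwa [add_comm]) (by rwa [add_comm])
  set p := star X x + star Y y with hp
  set q := X y - Y x with hq
  have hx : X p - star Y q = (c : 𝕜) • x := by
    simp only [p, q, map_add, map_sub, ← Module.End.mul_apply, h2.eq]
    have h := LinearMap.congr_fun h1 x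
    rw [LinearMap.add_apply, LinearMap.smul_apply, Module.End.one_apply] at h
    rw [← h]; abel
  have hy : Y p + star X q = (c : 𝕜) • y := by
    simp only [p, q, map_add, map_sub, ← Module.End.mul_apply, h4.eq]
    have h := LinearMap.congr_fun h3 y
    rw [LinearMap.add_apply, LinearMap.smul_apply, Module.End.one_apply] at h
    rw [← h]; abel
  have hpp : ⟪p, p⟫_𝕜 = ⟪x, X p⟫_𝕜 + ⟪y, Y p⟫_𝕜 := by
    nth_rewrite 1 [hp]
    rw [inner_add_left, star_eq_adjoint, star_eq_adjoint, adjoint_inner_left, adjoint_inner_left]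
  have hqq : ⟪q, q⟫_𝕜 = ⟪y, star X q⟫_𝕜 - ⟪x, star Y q⟫_𝕜 := by
    nth_rewrite 1 [hq]
    rw [inner_sub_left, star_eq_adjoint, star_eq_adjoint, adjoint_inner_right,
      adjoint_inner_right]
  have key : ⟪p, p⟫_𝕜 + ⟪q, q⟫_𝕜 = (c : 𝕜) * (⟪x, x⟫_𝕜 + ⟪y, y⟫_𝕜) := by
    calc ⟪p, p⟫_𝕜 + ⟪q, q⟫_𝕜 = ⟪x, X p - star Y q⟫_𝕜 + ⟪y, Y p + star X q⟫_𝕜 := by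
          rw [hpp, hqq, inner_sub_right, inner_add_right]; ring
      _ = (c : 𝕜) * (⟪x, x⟫_𝕜 + ⟪y, y⟫_𝕜) := by
          rw [hx, hy, inner_smul_right, inner_smul_right]; ring
  simp only [inner_self_eq_norm_sq_to_K] at key
  exact_mod_cast key

theorem inner_apply_sub_conj_smul_eq_zero {T : Module.End 𝕜 E} {u : E} (hu : ‖u‖ = 1) {a : 𝕜}
    (h : star T u = a • u) : ⟪u, T u - conj a • u⟫_𝕜 = 0 := by
  rw [inner_sub_right, ← adjoint_inner_left, ← star_eq_adjoint, h, inner_smul_left,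
    inner_smul_right, inner_self_eq_norm_sq_to_K, hu, RCLike.ofReal_one, one_pow, sub_self]

theorem norm_sq_apply_of_star_apply_eq {T : Module.End 𝕜 E} {u : E} (hu : ‖u‖ = 1) {a : 𝕜}
    (h : star T u = a • u) : ‖T u‖ ^ 2 = ‖a‖ ^ 2 + ‖T u - conj a • u‖ ^ 2 := by
  have h0 : ⟪conj a • u, T u - conj a • u⟫_𝕜 = 0 := by
    rw [inner_smul_left, inner_apply_sub_conj_smul_eq_zero hu h, mul_zero]
  have hpyth := norm_add_sq_eq_norm_sq_add_norm_sq_of_inner_eq_zero _ _ h0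
  rw [add_sub_cancel, norm_smul, RCLike.norm_conj, hu, mul_one] at hpyth
  rw [sq, sq, sq, hpyth]

theorem apply_eq_conj_smul_of_star_apply_eq {X Y : Module.End 𝕜 E} (hXY : Commute X Y) {c : ℝ}
    (hc : c ≠ 0) (hcol : star X * X + star Y * Y = (c : 𝕜) • 1) {u : E} (hu : ‖u‖ = 1)
    {a b : 𝕜} (ha : star X u = a • u) (hb : star Y u = b • u)
    (hXK : ∀ w ∈ (𝕜 ∙ u)ᗮ, X w ∈ (𝕜 ∙ u)ᗮ) (hYK : ∀ w ∈ (𝕜 ∙ u)ᗮ, Y w ∈ (𝕜 ∙ u)ᗮ)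
    (hrow : X.restrict hXK * star (X.restrict hXK) + Y.restrict hYK * star (Y.restrict hYK) =
      (c : 𝕜) • 1) :
    X u = conj a • u ∧ Y u = conj b • u := by
  let x : (𝕜 ∙ u)ᗮ := ⟨X u - conj a • u, Submodule.mem_orthogonal_singleton_iff_inner_right.mpr
    (inner_apply_sub_conj_smul_eq_zero hu ha)⟩
  let y : (𝕜 ∙ u)ᗮ := ⟨Y u - conj b • u, Submodule.mem_orthogonal_singleton_iff_inner_right.mpr
    (inner_apply_sub_conj_smul_eq_zero hu hb)⟩
  have hstar : star (X.restrict hXK) x + star (Y.restrict hYK) y = 0 := by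
    refine ext_inner_left 𝕜 fun w => ?_
    have hwu := Submodule.mem_orthogonal_singleton_iff_inner_left.mp w.2
    have hXw := Submodule.mem_orthogonal_singleton_iff_inner_left.mp (hXK w w.2)
    have hYw := Submodule.mem_orthogonal_singleton_iff_inner_left.mp (hYK w w.2)
    have hwu' := star_mul_add_star_mul_eq_smul_one_iff.mp hcol w u
    rw [hwu, mul_zero] at hwu'
    rw [inner_add_right, star_eq_adjoint, star_eq_adjoint, adjoint_inner_right,
      adjoint_inner_right, inner_zero_right, Submodule.coe_inner, Submodule.coe_inner]
    simp only [x, y, coe_restrict_apply, inner_sub_right, inner_smul_right, hXw, hYw]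
    linear_combination hwu'
  have hcomm : X.restrict hXK y - Y.restrict hYK x = conj a • y - conj b • x := by
    ext
    simp only [x, y, Submodule.coe_sub, Submodule.coe_smul, coe_restrict_apply, map_sub,
      map_smul, ← Module.End.mul_apply, hXY.eq, smul_sub, smul_smul, mul_comm (conj a)]
    abel
  have hnorm := norm_sq_star_add_star_add_norm_sq_sub (restrict_commute hXY hXK hYK) hc
    (star_restrict_mul_add_star_restrict_mul hXK hYK hcol) hrow x y
  rw [hstar, hcomm, norm_zero, zero_pow two_ne_zero, zero_add] at hnorm
  have hsum : ‖conj a‖ ^ 2 + ‖conj b‖ ^ 2 + ‖x‖ ^ 2 + ‖y‖ ^ 2 = c := by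
    have huu := norm_sq_apply_add_norm_sq_apply_eq hcol u
    rw [hu, one_pow, mul_one, norm_sq_apply_of_star_apply_eq hu ha,
      norm_sq_apply_of_star_apply_eq hu hb] at huu
    rw [RCLike.norm_conj, RCLike.norm_conj, ← huu]
    simp only [x, y, Submodule.coe_norm]
    ring
  obtain ⟨hx, hy⟩ := eq_zero_of_norm_smul_sub_smul_sq hsum hnorm
  constructor
  · simpa [x, sub_eq_zero] using congrArg Subtype.val hx
  · simpa [y, sub_eq_zero] using congrArg Subtype.val hy

theorem mul_star_add_mul_star_eq_of_restrict {X Y : Module.End 𝕜 E} {c : 𝕜}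
    (hcol : star X * X + star Y * Y = c • 1) {u : E} {a b : 𝕜} (ha : star X u = a • u)
    (hb : star Y u = b • u) (ha' : X u = conj a • u) (hb' : Y u = conj b • u)
    (hXK : ∀ w ∈ (𝕜 ∙ u)ᗮ, X w ∈ (𝕜 ∙ u)ᗮ) (hYK : ∀ w ∈ (𝕜 ∙ u)ᗮ, Y w ∈ (𝕜 ∙ u)ᗮ)
    (hrow : X.restrict hXK * star (X.restrict hXK) + Y.restrict hYK * star (Y.restrict hYK) =
      c • 1) :
    X * star X + Y * star Y = c • 1 := by
  have hX'K := mapsTo_orthogonal_span_singleton (T := star X) (by rw [star_star, ha'])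
  have hY'K := mapsTo_orthogonal_span_singleton (T := star Y) (by rw [star_star, hb'])
  rw [star_restrict hXK hX'K, star_restrict hYK hY'K] at hrow
  have hu : (X * star X + Y * star Y) u = c • u := by
    have h := LinearMap.congr_fun hcol u
    simp only [add_apply, Module.End.mul_apply, smul_apply, Module.End.one_apply, map_smul, ha,
      ha', hb, hb', smul_smul] at h ⊢
    rw [← h, mul_comm a, mul_comm b]
  ext v
  obtain ⟨_, hy, z, hz, rfl⟩ := (𝕜 ∙ u).exists_add_mem_mem_orthogonal v
  obtain ⟨t, rfl⟩ := Submodule.mem_span_singleton.mp hy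
  have hz' : (X * star X + Y * star Y) z = c • z :=
    congrArg Subtype.val (LinearMap.congr_fun hrow ⟨z, hz⟩)
  rw [map_add, map_smul, hu, hz', smul_apply, Module.End.one_apply, smul_add, smul_comm]

end LinearMap

theorem LinearMap.mul_star_add_mul_star_eq_of_commute {V : Type*} [NormedAddCommGroup V]
    [InnerProductSpace ℂ V] [FiniteDimensional ℂ V] {X Y : Module.End ℂ V} (hXY : Commute X Y)
    {c : ℝ} (hc : c ≠ 0) (hcol : star X * X + star Y * Y = (c : ℂ) • 1) :
    X * star X + Y * star Y = (c : ℂ) • 1 := by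
  induction hn : Module.finrank ℂ V generalizing V with
  | zero =>
    have : Subsingleton V := Module.finrank_zero_iff.mp hn
    ext v
    exact Subsingleton.elim _ _
  | succ n ih =>
    have : Nontrivial V := Module.nontrivial_of_finrank_eq_succ hn
    have : Fact (Module.finrank ℂ V = n + 1) := ⟨hn⟩
    obtain ⟨a, b, v, ha, hb⟩ := Module.End.exists_hasEigenvector_of_commute hXY.star_star
    set u : V := (‖v‖ : ℂ)⁻¹ • v
    have hu : ‖u‖ = 1 := norm_smul_inv_norm ha.2
    have hau : star X u = a • u := by rw [map_smul, ha.apply_eq_smul, smul_comm]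
    have hbu : star Y u = b • u := by rw [map_smul, hb.apply_eq_smul, smul_comm]
    have hXK := mapsTo_orthogonal_span_singleton hau
    have hYK := mapsTo_orthogonal_span_singleton hbu
    have hrow := ih (restrict_commute hXY hXK hYK)
      (star_restrict_mul_add_star_restrict_mul hXK hYK hcol)
      (Submodule.finrank_orthogonal_span_singleton (norm_ne_zero_iff.mp (hu ▸ one_ne_zero)))
    obtain ⟨ha', hb'⟩ := apply_eq_conj_smul_of_star_apply_eq hXY hc hcol hu hau hbu hXK hYK hrow
    exact mul_star_add_mul_star_eq_of_restrict hcol hau hbu ha' hb' hXK hYK hrow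

theorem Matrix.mul_conjTranspose_add_mul_conjTranspose_eq_of_commute {n : Type*} [Fintype n]
    [DecidableEq n] {X Y : Matrix n n ℂ} (hXY : Commute X Y) {c : ℝ} (hc : c ≠ 0)
    (h : Xᴴ * X + Yᴴ * Y = (c : ℂ) • 1) : X * Xᴴ + Y * Yᴴ = (c : ℂ) • 1 := by
  let e := (LinearMap.toMatrixOrthonormal (EuclideanSpace.basisFun n ℂ)).symm
  have hcol : star (e X) * e X + star (e Y) * e Y = (c : ℂ) • 1 := by
    rw [← map_star e, ← map_star e, ← map_mul e, ← map_mul e, ← map_add e, star_eq_conjTranspose,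
      star_eq_conjTranspose, h, map_smul e, map_one e]
  have hrow := LinearMap.mul_star_add_mul_star_eq_of_commute (hXY.map e) hc hcol
  apply EquivLike.injective e
  rw [map_add e, map_mul e, map_mul e, ← star_eq_conjTranspose, ← star_eq_conjTranspose,
    map_star e, map_star e, hrow, map_smul e, map_one e]

theorem mSharp_eq_conjTranspose {r : ℕ} (A : ℤ →₀ Matrix (Fin r) (Fin r) ℝ) {z : ℂ}
    (hz : ‖z‖ = 1) : mSharp A z = (mSymbol A z)ᴴ := by
  ext i k
  simp [mSharp, mSymbol, Matrix.sum_apply, Complex.inv_eq_conj hz, star_sum]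

/-- If `A` satisfies the orthogonality condition on the unit circle and `A(z)`, `A(-z)`
commute there, then the alternating flip `B(z) = z A^♯(-z)` satisfies the remaining
two QMF conditions on the unit circle. -/
theorem alternating_flip_of_commute {r : ℕ}
    (A : ℤ →₀ Matrix (Fin r) (Fin r) ℝ)
    (B : ℂ → Matrix (Fin r) (Fin r) ℂ)
    (hOrth : ∀ z : ℂ, ‖z‖ = 1 →
      mSharp A z * mSymbol A z + mSharp A (-z) * mSymbol A (-z) = 4)
    (hComm : ∀ z : ℂ, ‖z‖ = 1 →
      mSymbol A z * mSymbol A (-z) = mSymbol A (-z) * mSymbol A z)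
    (hB : ∀ z : ℂ, B z = z • mSharp A (-z)) :
    ∀ z : ℂ, ‖z‖ = 1 →
      (mSharp A z * B z + mSharp A (-z) * B (-z) = 0) ∧
      ((B z⁻¹)ᵀ * B z + (B (-z)⁻¹)ᵀ * B (-z) = 4) := by
  intro z hz
  have hz0 : z ≠ 0 := norm_ne_zero_iff.mp (hz ▸ one_ne_zero)
  have hX : mSharp A z = (mSymbol A z)ᴴ := mSharp_eq_conjTranspose A hz
  have hY : mSharp A (-z) = (mSymbol A (-z))ᴴ := mSharp_eq_conjTranspose A (by rwa [norm_neg])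
  have hBt : ∀ w, (B w⁻¹)ᵀ = w⁻¹ • mSymbol A (-w) := fun w => by
    rw [hB, transpose_smul, mSharp, transpose_transpose, inv_neg, inv_inv]
  have h4 : ((4 : ℝ) : ℂ) • (1 : Matrix (Fin r) (Fin r) ℂ) = 4 := by
    simp [ofNat_smul_eq_nsmul (R := ℂ)]
  constructor
  · rw [hB, hB, neg_neg, hX, hY, mul_smul_comm, mul_smul_comm, ← star_eq_conjTranspose,
      ← star_eq_conjTranspose, (Commute.star_star (hComm z hz)).eq, neg_smul, add_neg_cancel]
  · rw [hBt, hBt, hB, hB, neg_neg, hX, hY, smul_mul_smul_comm, smul_mul_smul_comm,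
      inv_mul_cancel₀ hz0, inv_mul_cancel₀ (neg_ne_zero.mpr hz0), one_smul, one_smul, add_comm,
      ← h4]
    refine mul_conjTranspose_add_mul_conjTranspose_eq_of_commute (hComm z hz) (by norm_num) ?_
    rw [h4, ← hX, ← hY]
    exact hOrth z hz
end

section
/- Let a_1(z), …, a_n(z), n ≥ 2, be Laurent polynomials with no common zero in ℂ\{0}. Then there exists an n×n matrix Laurent polynomial P(z) whose first row is (a_1(z), …, a_n(z)) and such that det P(z) = 1 for all z ∈ ℂ\{0}. -/
/-!
Write `aᵢ(z) = z ^ kᵢ * Aᵢ(z)` with `Aᵢ ∈ ℂ[z]` and `Aᵢ(0) ≠ 0` whenever `aᵢ ≠ 0`. The `Aᵢ` then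
have no common zero on all of `ℂ`, so they generate the unit ideal of `ℂ[z]`. Over a Bézout domain
every such unimodular row `b` is the first row of a matrix of determinant one: factor the tail as
`d • g` with `g` unimodular, complete `g` by induction, and use a relation `c * b₀ + s * d = 1`
to adjoin one row and one column. Multiplying column `j` of the resulting polynomial matrix by
`z ^ kⱼ` and its second row by `z ^ (-∑ kⱼ)` gives the required Laurent matrix.
-/

open Matrix Finset

/-- Evaluation of the Laurent polynomial with coefficient sequence `a : ℤ →₀ ℂ`. -/
noncomputable def leval (a : ℤ →₀ ℂ) (z : ℂ) : ℂ :=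
  ∑ j ∈ a.support, a j * z ^ j

/-- Evaluation of a matrix Laurent polynomial given by its coefficients. -/
noncomputable def msym {n : ℕ} (P : ℤ →₀ Matrix (Fin n) (Fin n) ℂ) (z : ℂ) :
    Matrix (Fin n) (Fin n) ℂ :=
  ∑ j ∈ P.support, z ^ j • P j

open scoped Polynomial

theorem Ideal.span_range_eq_top_iff_exists_sum_mul_eq_one {R ι : Type*} [CommRing R] [Fintype ι]
    (f : ι → R) : Ideal.span (Set.range f) = ⊤ ↔ ∃ c : ι → R, ∑ i, c i * f i = 1 := by
  rw [← Ideal.mem_span_range_iff_exists_fun, Ideal.eq_top_iff_one]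

theorem IsBezout.exists_eq_smul_and_span_range_eq_top {R ι : Type*} [CommRing R] [IsDomain R]
    [IsBezout R] [Fintype ι] [Nonempty ι] (f : ι → R) :
    ∃ (d : R) (g : ι → R), f = d • g ∧ Ideal.span (Set.range g) = ⊤ := by
  obtain ⟨d, hd⟩ := IsBezout.isPrincipal_of_FG _ (Submodule.fg_span (Set.finite_range f))
  simp only [Ideal.submodule_span_eq] at hd
  have hf : ∀ i, ∃ g, g * d = f i := fun i =>
    Ideal.mem_span_singleton'.mp (hd ▸ Ideal.subset_span (Set.mem_range_self i))
  choose g hg using hf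
  by_cases hd0 : d = 0
  · refine ⟨0, 1, funext fun i => ?_, ?_⟩
    · simp [← hg i, hd0]
    · simp [Pi.one_def, Set.range_const]
  · obtain ⟨c, hc⟩ := Ideal.mem_span_range_iff_exists_fun.mp
      (hd ▸ Ideal.mem_span_singleton_self d : d ∈ Ideal.span (Set.range f))
    refine ⟨d, g, funext fun i => by simp [← hg i, mul_comm], ?_⟩
    refine (Ideal.span_range_eq_top_iff_exists_sum_mul_eq_one g).mpr ⟨c, mul_right_cancel₀ hd0 ?_⟩
    simp_rw [sum_mul, mul_assoc, hg, hc, one_mul]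

/- Expanding `det N` along the first column, whose only nonzero entries are `x` and `-s`, gives
`(c * x + s * y) * det M`. -/
theorem Matrix.exists_row_zero_eq_vecCons_smul_det_eq_one {R : Type*} [CommRing R] {n : ℕ}
    (M : Matrix (Fin (n + 1)) (Fin (n + 1)) R) (hM : M.det = 1) {x y c s : R}
    (h : c * x + s * y = 1) :
    ∃ N : Matrix (Fin (n + 2)) (Fin (n + 2)) R, N 0 = vecCons x (y • M 0) ∧ N.det = 1 := by
  let N : Matrix (Fin (n + 2)) (Fin (n + 2)) R := of (vecCons (vecCons x (y • M 0))
    (vecCons (vecCons (-s) (c • M 0)) fun i => vecCons 0 (M i.succ)))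
  have h₀ : N.submatrix (Fin.succAbove 0) Fin.succ = M.updateRow 0 (c • M 0) := by
    ext i j
    refine Fin.cases ?_ (fun i => ?_) i <;> simp [N, updateRow_apply, Fin.succ_ne_zero]
  have h₁ : N.submatrix (Fin.succAbove 1) Fin.succ = M.updateRow 0 (y • M 0) := by
    ext i j
    refine Fin.cases ?_ (fun i => ?_) i <;> simp [N, updateRow_apply, Fin.succ_ne_zero]
  refine ⟨N, rfl, ?_⟩
  rw [det_succ_column_zero, Fin.sum_univ_succ, Fin.sum_univ_succ, Fin.succ_zero_eq_one, h₀, h₁,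
    det_updateRow_smul, det_updateRow_smul, updateRow_eq_self, hM]
  simpa [N, mul_comm] using h

theorem Matrix.exists_row_zero_eq_det_eq_one_of_span_eq_top {R : Type*} [CommRing R] [IsDomain R]
    [IsBezout R] {n : ℕ} (b : Fin (n + 2) → R) (hb : Ideal.span (Set.range b) = ⊤) :
    ∃ M : Matrix (Fin (n + 2)) (Fin (n + 2)) R, M 0 = b ∧ M.det = 1 := by
  rw [Ideal.span_range_eq_top_iff_exists_sum_mul_eq_one] at hb
  induction n with
  | zero =>
    obtain ⟨c, hc⟩ := hb
    rw [Fin.sum_univ_two] at hc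
    obtain ⟨N, hN, hdet⟩ := exists_row_zero_eq_vecCons_smul_det_eq_one 1 det_one hc
    refine ⟨N, hN ▸ ?_, hdet⟩
    ext i
    fin_cases i <;> simp
  | succ n ih =>
    obtain ⟨d, g, hbg, hg⟩ := IsBezout.exists_eq_smul_and_span_range_eq_top (Fin.tail b)
    obtain ⟨M, hM, hdet⟩ := ih g ((Ideal.span_range_eq_top_iff_exists_sum_mul_eq_one g).mp hg)
    obtain ⟨c, hc⟩ := hb
    have hcd : c 0 * b 0 + (∑ i, c i.succ * g i) * d = 1 := by
      have hb_succ : ∀ i, b i.succ = d * g i := fun i => congrFun hbg i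
      rw [← hc, Fin.sum_univ_succ (fun i => c i * b i), sum_mul]
      simp only [hb_succ, mul_comm, mul_assoc]
    obtain ⟨N, hN, hNdet⟩ := exists_row_zero_eq_vecCons_smul_det_eq_one M hdet hcd
    refine ⟨N, ?_, hNdet⟩
    rw [hN, hM, ← hbg]
    exact Fin.cons_self_tail b

theorem Polynomial.span_range_eq_top_of_forall_exists_eval_ne_zero {K ι : Type*} [Field K]
    [IsAlgClosed K] (A : ι → K[X]) (h : ∀ z, ∃ i, (A i).eval z ≠ 0) :
    Ideal.span (Set.range A) = ⊤ := by
  obtain ⟨G, hG⟩ := Submodule.IsPrincipal.principal (Ideal.span (Set.range A))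
  rw [Ideal.submodule_span_eq] at hG
  have hGA : ∀ i, G ∣ A i := fun i =>
    Ideal.mem_span_singleton.mp (hG ▸ Ideal.subset_span (Set.mem_range_self i))
  rw [hG, Ideal.span_singleton_eq_top]
  by_contra hG_unit
  obtain ⟨z, hz⟩ := IsAlgClosed.exists_root G (mt isUnit_iff_degree_eq_zero.mpr hG_unit)
  obtain ⟨i, hi⟩ := h z
  exact hi (eval_eq_zero_of_dvd_of_eval_eq_zero (hGA i) hz)

theorem Finset.prod_zpow_eq_zpow_sum₀ {G₀ ι : Type*} [CommGroupWithZero G₀] {a : G₀}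
    (ha : a ≠ 0) (s : Finset ι) (f : ι → ℤ) : ∏ i ∈ s, a ^ f i = a ^ ∑ i ∈ s, f i :=
  cons_induction (by simp) (fun _ _ _ h => by rw [prod_cons, sum_cons, h, zpow_add₀ ha]) s

theorem Matrix.det_of_zpow_add_mul {K ι : Type*} [Field K] [Fintype ι] [DecidableEq ι] {z : K}
    (hz : z ≠ 0) (u v : ι → ℤ) (N : Matrix ι ι K) :
    (of fun i j => z ^ (u i + v j) * N i j).det = z ^ (∑ i, u i + ∑ j, v j) * N.det := by
  have hN : (of fun i j => z ^ (u i + v j) * N i j) =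
      of fun i j => z ^ u i * (of fun i j => z ^ v j * N i j) i j := by
    ext i j
    rw [of_apply, of_apply, of_apply, zpow_add₀ hz, mul_assoc]
  rw [hN, det_mul_column, det_mul_row, prod_zpow_eq_zpow_sum₀ hz, prod_zpow_eq_zpow_sum₀ hz,
    ← mul_assoc, ← zpow_add₀ hz]

theorem exists_zpow_mul_eval_eq_leval (f : ℤ →₀ ℂ) :
    ∃ (k : ℤ) (Q : ℂ[X]), (∀ z ≠ 0, z ^ k * Q.eval z = leval f z) ∧ (f ≠ 0 → Q.eval 0 ≠ 0) := by
  by_cases hf : f = 0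
  · exact ⟨0, 0, fun z _ => by simp [hf, leval], fun h => absurd hf h⟩
  have hne : f.support.Nonempty := Finsupp.support_nonempty_iff.mpr hf
  set k := f.support.min' hne
  have hk : ∀ j ∈ f.support, (((j - k).toNat : ℕ) : ℤ) = j - k := fun j hj =>
    Int.toNat_of_nonneg (sub_nonneg.mpr (min'_le _ _ hj))
  refine ⟨k, ∑ j ∈ f.support, .C (f j) * .X ^ (j - k).toNat, fun z hz => ?_, fun _ => ?_⟩
  · rw [Polynomial.eval_finsetSum, mul_sum, leval]
    refine sum_congr rfl fun j hj => ?_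
    rw [Polynomial.eval_mul, Polynomial.eval_C, Polynomial.eval_pow, Polynomial.eval_X,
      ← zpow_natCast, hk j hj, mul_left_comm, ← zpow_add₀ hz, add_sub_cancel]
  · rw [Polynomial.eval_finsetSum, sum_eq_single_of_mem k (min'_mem _ hne)]
    · simpa using Finsupp.mem_support_iff.mp (min'_mem _ hne)
    · intro j hj hjk
      have : (j - k).toNat ≠ 0 := by have := hk j hj; omega
      simp [this]

theorem exists_leval_eq_zpow_mul_eval (p : ℂ[X]) (k : ℤ) :
    ∃ f : ℤ →₀ ℂ, ∀ z ≠ 0, leval f z = z ^ k * p.eval z := by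
  refine ⟨∑ t ∈ p.support, Finsupp.single ((t : ℤ) + k) (p.coeff t), fun z hz => ?_⟩
  change (Finsupp.sum _ fun t c => c * z ^ t) = _
  rw [← Finsupp.sum_finsetSum_index (fun _ => zero_mul _) (fun _ _ _ => add_mul _ _ _),
    Polynomial.eval_eq_sum, Polynomial.sum_def, mul_sum]
  refine sum_congr rfl fun t _ => ?_
  rw [Finsupp.sum_single_index (zero_mul _), zpow_add₀ hz, zpow_natCast]
  ring

theorem exists_msym_eq_of_leval {n : ℕ} (E : Fin n → Fin n → ℤ →₀ ℂ) :
    ∃ P : ℤ →₀ Matrix (Fin n) (Fin n) ℂ, ∀ z, msym P z = of fun i j => leval (E i j) z := by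
  refine ⟨∑ i, ∑ j, (E i j).mapRange (single i j) (single_zero i j), fun z => ?_⟩
  change ((∑ i, ∑ j, (E i j).mapRange (single i j) (single_zero i j)).sum fun t A => z ^ t • A) = _
  rw [← Finsupp.sum_finsetSum_index (fun _ => smul_zero _) (fun _ _ _ => smul_add _ _ _)]
  simp_rw [← Finsupp.sum_finsetSum_index (fun _ => smul_zero _) (fun _ _ _ => smul_add _ _ _),
    Finsupp.sum_mapRange_index (fun _ => smul_zero _), smul_single]
  rw [← sum_sum_single]
  refine sum_congr rfl fun i _ => sum_congr rfl fun j _ => ?_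
  simp only [Finsupp.sum, leval, smul_eq_mul, mul_comm (E i j _)]
  exact (map_sum (singleAddMonoidHom (α := ℂ) i j) _ _).symm

theorem exists_msym_eq_zpow_mul_eval {n : ℕ} (M : Matrix (Fin n) (Fin n) ℂ[X])
    (e : Fin n → Fin n → ℤ) :
    ∃ P : ℤ →₀ Matrix (Fin n) (Fin n) ℂ, ∀ z ≠ 0,
      msym P z = of fun i j => z ^ e i j * (M i j).eval z := by
  choose E hE using fun i j => exists_leval_eq_zpow_mul_eval (M i j) (e i j)
  obtain ⟨P, hP⟩ := exists_msym_eq_of_leval E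
  exact ⟨P, fun z hz => by rw [hP]; ext i j; exact hE i j z hz⟩

/-- Completion: Laurent polynomials `a₁, …, aₙ` (`n ≥ 2`) with no common zero in
`ℂ \ {0}` form the first row of an `n×n` matrix Laurent polynomial of determinant 1. -/
theorem laurent_row_completion {n : ℕ} (hn : 2 ≤ n) (a : Fin n → (ℤ →₀ ℂ))
    (hcz : ∀ z : ℂ, z ≠ 0 → ∃ i : Fin n, leval (a i) z ≠ 0) :
    ∃ P : ℤ →₀ Matrix (Fin n) (Fin n) ℂ, ∀ z : ℂ, z ≠ 0 →
      (∀ i : Fin n, msym P z ⟨0, by omega⟩ i = leval (a i) z) ∧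
      (msym P z).det = 1 := by
  obtain ⟨m, rfl⟩ : ∃ m, n = m + 2 := ⟨n - 2, by omega⟩
  choose k A hA hA0 using fun i => exists_zpow_mul_eval_eq_leval (a i)
  have hA_root : ∀ z, ∃ i, (A i).eval z ≠ 0 := by
    intro z
    rcases eq_or_ne z 0 with rfl | hz
    · obtain ⟨i, hi⟩ := hcz 1 one_ne_zero
      exact ⟨i, hA0 i fun h => hi (by simp [h, leval])⟩
    · obtain ⟨i, hi⟩ := hcz z hz
      exact ⟨i, fun h => hi (by rw [← hA i z hz, h, mul_zero])⟩
  obtain ⟨M, hM0, hMdet⟩ := Matrix.exists_row_zero_eq_det_eq_one_of_span_eq_top A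
    (Polynomial.span_range_eq_top_of_forall_exists_eval_ne_zero A hA_root)
  have hMdet_eval : ∀ z, (M.map (Polynomial.eval z)).det = 1 := fun z => by
    simpa [hMdet] using (RingHom.map_det (Polynomial.evalRingHom z) M).symm
  obtain ⟨P, hP⟩ := exists_msym_eq_zpow_mul_eval M
    fun i j => (if i = 1 then -∑ l, k l else 0) + k j
  refine ⟨P, fun z hz => ⟨fun j => ?_, ?_⟩⟩
  · rw [hP z hz, ← hA j z hz, ← hM0]
    simp
  · rw [hP z hz]
    refine (det_of_zpow_add_mul hz _ k (M.map (Polynomial.eval z))).trans ?_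
    rw [sum_ite_eq', if_pos (mem_univ _), neg_add_cancel, zpow_zero, one_mul, hMdet_eval]
end

section
/- Let A_0(z), A_1(z) be r×r matrix Laurent polynomials with A_0^♯(z)A_0(z) + A_1^♯(z)A_1(z) = 2I on the unit circle. Suppose D_0(z), D_1(z) are r×r matrix Laurent polynomials such that the 2r×2r matrix G(z) = [[A_0(z), D_0^♯(z)], [A_1(z), D_1^♯(z)]] satisfies A_0^♯(z)D_0^♯(z) + A_1^♯(z)D_1^♯(z) = 0, and let K(z) be a spectral factor, i.e. D(z) := 2(D_0(z)D_0^♯(z) + D_1(z)D_1^♯(z)) = K(z)K^♯(z) with K(z) invertible on the unit circle. Then B_0(z) := 2 D_0^♯(z)(K^♯(z))^{−1} and B_1(z) := 2 D_1^♯(z)(K^♯(z))^{−1} satisfy A_0^♯(z)B_0(z) + A_1^♯(z)B_1(z) = 0 and B_0^♯(z)B_0(z) + B_1^♯(z)B_1(z) = 2I on the unit circle. -/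
/-! Orthogonality passes from `D_i^♯` to `B_i` by right multiplication with `2 (K^♯)⁻¹`. For the
normalization, `B_i^♯ = 2 K⁻¹ D_i`, so `∑ B_i^♯ B_i = 2 K⁻¹ · 2 (∑ D_i D_i^♯) · (K^♯)⁻¹
= 2 K⁻¹ (K K^♯) (K^♯)⁻¹ = 2I`. -/

open Matrix Finset MeasureTheory

theorem transpose_mSharp_inv_mul_transpose_inv {r : ℕ} (D : ℤ →₀ Matrix (Fin r) (Fin r) ℝ)
    (K : ℂ → Matrix (Fin r) (Fin r) ℂ) (z : ℂ) :
    (mSharp D z⁻¹ * ((K z⁻¹⁻¹)ᵀ)⁻¹)ᵀ = (K z)⁻¹ * mSymbol D z := by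
  rw [transpose_mul, ← transpose_nonsing_inv, transpose_transpose, mSharp, transpose_transpose,
    inv_inv]

theorem smul_inv_mul_smul_mul_inv_add {n R : Type*} [Fintype n] [DecidableEq n] [CommRing R]
    (K L P₀ Q₀ P₁ Q₁ : Matrix n n R) (c : R) (hK : IsUnit K) (hL : IsUnit L)
    (h : c • (P₀ * Q₀ + P₁ * Q₁) = K * L) :
    c • (K⁻¹ * P₀) * (c • (Q₀ * L⁻¹)) + c • (K⁻¹ * P₁) * (c • (Q₁ * L⁻¹)) = c • 1 := by
  have hKL : K⁻¹ * (K * L) * L⁻¹ = 1 := by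
    rw [← mul_assoc, nonsing_inv_mul _ ((isUnit_iff_isUnit_det K).mp hK), one_mul,
      mul_nonsing_inv _ ((isUnit_iff_isUnit_det L).mp hL)]
  calc c • (K⁻¹ * P₀) * (c • (Q₀ * L⁻¹)) + c • (K⁻¹ * P₁) * (c • (Q₁ * L⁻¹))
      = c • (K⁻¹ * (c • (P₀ * Q₀ + P₁ * Q₁)) * L⁻¹) := by
        simp only [smul_mul_assoc, mul_smul_comm, smul_add, mul_add, add_mul, mul_assoc]
    _ = c • 1 := by rw [h, hKL]

theorem wavelet_subsymbols_construction_general {r : ℕ}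
    (A0 A1 D0 D1 : ℤ →₀ Matrix (Fin r) (Fin r) ℝ)
    (K B0 B1 : ℂ → Matrix (Fin r) (Fin r) ℂ)
    (hOrth : ∀ z : ℂ, ‖z‖ = 1 →
      mSharp A0 z * mSharp D0 z + mSharp A1 z * mSharp D1 z = 0)
    (hKunit : ∀ z : ℂ, ‖z‖ = 1 → IsUnit (K z))
    (hSpec : ∀ z : ℂ, ‖z‖ = 1 →
      (2 : ℂ) • (mSymbol D0 z * mSharp D0 z + mSymbol D1 z * mSharp D1 z)
        = K z * (K z⁻¹)ᵀ)
    (hB0 : ∀ z : ℂ, B0 z = (2 : ℂ) • (mSharp D0 z * ((K z⁻¹)ᵀ)⁻¹))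
    (hB1 : ∀ z : ℂ, B1 z = (2 : ℂ) • (mSharp D1 z * ((K z⁻¹)ᵀ)⁻¹)) :
    ∀ z : ℂ, ‖z‖ = 1 →
      (mSharp A0 z * B0 z + mSharp A1 z * B1 z = 0) ∧
      ((B0 z⁻¹)ᵀ * B0 z + (B1 z⁻¹)ᵀ * B1 z = 2) := by
  intro z hz
  have hz_inv : ‖z⁻¹‖ = 1 := by rw [norm_inv, hz, inv_one]
  refine ⟨?_, ?_⟩
  · simp only [hB0, hB1, mul_smul_comm, ← smul_add, ← mul_assoc, ← add_mul, hOrth z hz,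
      zero_mul, smul_zero]
  · rw [hB0 z⁻¹, hB1 z⁻¹, hB0 z, hB1 z, transpose_smul, transpose_smul,
      transpose_mSharp_inv_mul_transpose_inv, transpose_mSharp_inv_mul_transpose_inv,
      smul_inv_mul_smul_mul_inv_add _ _ _ _ _ _ _ (hKunit z hz)
        ((isUnit_transpose _).mpr (hKunit z⁻¹ hz_inv)) (hSpec z hz), two_smul, one_add_one_eq_two]

/-- Construction of the wavelet subsymbols: if `A_0^♯ A_0 + A_1^♯ A_1 = 2I`,
`A_0^♯ D_0^♯ + A_1^♯ D_1^♯ = 0` and `K` is a spectral factor of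
`D = 2(D_0 D_0^♯ + D_1 D_1^♯)`, then `B_i = 2 D_i^♯ (K^♯)⁻¹` satisfy the last two
QMF equations on the unit circle. -/
theorem wavelet_subsymbols_construction {r : ℕ}
    (A0 A1 D0 D1 : ℤ →₀ Matrix (Fin r) (Fin r) ℝ)
    (K B0 B1 : ℂ → Matrix (Fin r) (Fin r) ℂ)
    (hQMF : ∀ z : ℂ, ‖z‖ = 1 →
      mSharp A0 z * mSymbol A0 z + mSharp A1 z * mSymbol A1 z = 2)
    (hOrth : ∀ z : ℂ, ‖z‖ = 1 →
      mSharp A0 z * mSharp D0 z + mSharp A1 z * mSharp D1 z = 0)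
    (hKunit : ∀ z : ℂ, ‖z‖ = 1 → IsUnit (K z))
    (hSpec : ∀ z : ℂ, ‖z‖ = 1 →
      (2 : ℂ) • (mSymbol D0 z * mSharp D0 z + mSymbol D1 z * mSharp D1 z)
        = K z * (K z⁻¹)ᵀ)
    (hB0 : ∀ z : ℂ, B0 z = (2 : ℂ) • (mSharp D0 z * ((K z⁻¹)ᵀ)⁻¹))
    (hB1 : ∀ z : ℂ, B1 z = (2 : ℂ) • (mSharp D1 z * ((K z⁻¹)ᵀ)⁻¹)) :
    ∀ z : ℂ, ‖z‖ = 1 →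
      (mSharp A0 z * B0 z + mSharp A1 z * B1 z = 0) ∧
      ((B0 z⁻¹)ᵀ * B0 z + (B1 z⁻¹)ᵀ * B1 z = 2) :=
  wavelet_subsymbols_construction_general A0 A1 D0 D1 K B0 B1 hOrth hKunit hSpec hB0 hB1
end

section
/- Let F ∈ L²(ℝ, ℝ^{r×r}) be a matrix function with orthonormal integer translates, i.e., ∫ F(x)^T F(x+k) dx = δ_{k0} I for all k ∈ ℤ, satisfying the refinement equation F = Σ_j F(2·−j) A_j for a finitely supported matrix mask A. Then the symbol satisfies A^♯(z)A(z) + A^♯(−z)A(−z) = 4I for all z on the unit circle. -/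
/-!
Substituting the refinement equation into `⟨F, F(· + k)⟩` and rescaling `x ↦ 2x - m` turns the
orthonormality of the integer translates of `F` into the discrete relation
`∑ₘ Aₘᵀ A_{m+2k} = 2 δₖ₀ I` for the mask. On the other side, `A^♯(z) A(z)` is the Laurent polynomial
`∑_d z^d ∑ₘ Aₘᵀ A_{m+d}`; adding its value at `-z` cancels the odd powers and doubles the even
ones, leaving `2 · 2 I = 4 I`.
-/

open Matrix Finset MeasureTheory

open scoped ENNReal

theorem MeasureTheory.MemLp.comp_mul_add {E : Type*} [NormedAddCommGroup E] {p : ℝ≥0∞}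
    {f : ℝ → E} (hf : MemLp f p) {a : ℝ} (ha : a ≠ 0) (b : ℝ) :
    MemLp (fun x => f (a * x + b)) p := by
  have hmap : Measure.map (fun x : ℝ => a * x + b) volume = ENNReal.ofReal |a⁻¹| • volume := by
    rw [show (fun x : ℝ => a * x + b) = (· + b) ∘ (a * ·) from rfl,
      ← Measure.map_map (measurable_add_const b) (measurable_const_mul a),
      Real.map_volume_mul_left ha, Measure.map_smul, map_add_right_eq_self]
  have hf' : MemLp f p (Measure.map (fun x => a * x + b) volume) := by
    rw [hmap]; exact hf.smul_measure ENNReal.ofReal_ne_top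
  exact hf'.comp_of_map (by fun_prop)

theorem MeasureTheory.Measure.integral_comp_mul_add {E : Type*} [NormedAddCommGroup E]
    [NormedSpace ℝ E] (g : ℝ → E) (a b : ℝ) :
    ∫ x, g (a * x + b) = |a⁻¹| • ∫ y, g y := by
  rw [Measure.integral_comp_mul_left (fun y => g (y + b)), integral_add_right_eq_self]

theorem Matrix.mul_mul_apply_eq_sum {l m n o : Type*} [Fintype m] [Fintype n] {α : Type*}
    [NonUnitalNonAssocSemiring α] (P : Matrix l m α) (M : Matrix m n α) (Q : Matrix n o α)
    (i : l) (j : o) : (P * M * Q) i j = ∑ u, ∑ v, P i u * M u v * Q v j := by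
  simp only [mul_apply, sum_mul]
  exact sum_comm

section MatInner

variable {ι κ : Type*} [Fintype ι]

/-- The paper's `⟨G, H⟩`; for real entries `Gᴴ = Gᵀ`. -/
noncomputable def matInner (G H : ℝ → Matrix ι κ ℝ) : Matrix κ κ ℝ :=
  of fun i j => ∫ x, ((G x)ᵀ * H x) i j

theorem integrable_transpose_mul_apply {G H : ℝ → Matrix ι κ ℝ}
    (hG : ∀ i j, MemLp (fun x => G x i j) 2) (hH : ∀ i j, MemLp (fun x => H x i j) 2)
    (i j : κ) : Integrable fun x => ((G x)ᵀ * H x) i j := by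
  simp only [mul_apply, transpose_apply]
  exact integrable_finsetSum _ fun p _ => (hG p i).integrable_mul (hH p j)

theorem matInner_comp_mul_add (G H : ℝ → Matrix ι κ ℝ) (a b : ℝ) :
    matInner (fun x => G (a * x + b)) (fun x => H (a * x + b)) = |a⁻¹| • matInner G H := by
  ext i j
  exact Measure.integral_comp_mul_add (fun y => ((G y)ᵀ * H y) i j) a b

theorem integrable_mul_mul_apply [Fintype κ] {Φ : ℝ → Matrix κ κ ℝ}
    (hΦ : ∀ u v, Integrable fun x => Φ x u v) (P Q : Matrix κ κ ℝ) (i j : κ) :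
    Integrable fun x => (P * Φ x * Q) i j := by
  simp only [mul_mul_apply_eq_sum]
  exact integrable_finsetSum _ fun u _ => integrable_finsetSum _ fun v _ =>
    ((hΦ u v).const_mul _).mul_const _

theorem integral_mul_mul_apply [Fintype κ] {Φ : ℝ → Matrix κ κ ℝ}
    (hΦ : ∀ u v, Integrable fun x => Φ x u v) (P Q : Matrix κ κ ℝ) (i j : κ) :
    ∫ x, (P * Φ x * Q) i j = (P * of (fun u v => ∫ x, Φ x u v) * Q) i j := by
  simp only [mul_mul_apply_eq_sum, of_apply]
  rw [integral_finsetSum _ fun u _ => integrable_finsetSum _ fun v _ =>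
    ((hΦ u v).const_mul _).mul_const _]
  refine sum_congr rfl fun u _ => ?_
  rw [integral_finsetSum _ fun v _ => ((hΦ u v).const_mul _).mul_const _]
  simp only [integral_mul_const, integral_const_mul]

theorem matInner_sum_mul_sum_mul [Fintype κ] {α β : Type*} (s : Finset α) (t : Finset β)
    {G : α → ℝ → Matrix ι κ ℝ} {H : β → ℝ → Matrix ι κ ℝ}
    (P : α → Matrix κ κ ℝ) (Q : β → Matrix κ κ ℝ)
    (hGH : ∀ a b u v, Integrable fun x => ((G a x)ᵀ * H b x) u v) :
    matInner (fun x => ∑ a ∈ s, G a x * P a) (fun x => ∑ b ∈ t, H b x * Q b) =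
      ∑ a ∈ s, ∑ b ∈ t, (P a)ᵀ * matInner (G a) (H b) * Q b := by
  have hexpand : ∀ x, (∑ a ∈ s, G a x * P a)ᵀ * (∑ b ∈ t, H b x * Q b) =
      ∑ a ∈ s, ∑ b ∈ t, (P a)ᵀ * ((G a x)ᵀ * H b x) * Q b := by
    intro x
    simp only [transpose_sum, transpose_mul, Matrix.sum_mul, Matrix.mul_sum, Matrix.mul_assoc]
    exact sum_comm
  ext i j
  simp only [matInner, of_apply, hexpand, Matrix.sum_apply]
  rw [integral_finsetSum _ fun a _ => integrable_finsetSum _ fun b _ =>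
    integrable_mul_mul_apply (hGH a b) _ _ i j]
  refine sum_congr rfl fun a _ => ?_
  rw [integral_finsetSum _ fun b _ => integrable_mul_mul_apply (hGH a b) _ _ i j]
  exact sum_congr rfl fun b _ => integral_mul_mul_apply (hGH a b) _ _ i j

end MatInner

section Mask

variable {ι κ : Type*} [Fintype ι] [Fintype κ]

def maskCorrelation (A : ℤ →₀ Matrix κ κ ℝ) (d : ℤ) : Matrix κ κ ℝ :=
  ∑ m ∈ A.support, (A m)ᵀ * A (m + d)

theorem sum_transpose_mul_smul_ite_mul [DecidableEq κ] (A : ℤ →₀ Matrix κ κ ℝ) (c : ℝ) (d : ℤ) :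
    ∑ m ∈ A.support, ∑ n ∈ A.support,
        (A m)ᵀ * (c • if m + d - n = 0 then (1 : Matrix κ κ ℝ) else 0) * A n =
      c • maskCorrelation A d := by
  rw [maskCorrelation, smul_sum]
  refine sum_congr rfl fun m _ => ?_
  rw [sum_eq_single (m + d)]
  · simp
  · intro n _ hn
    simp [sub_eq_zero, Ne.symm hn]
  · intro hn
    simp [Finsupp.notMem_support_iff.mp hn]

theorem maskCorrelation_two_mul [DecidableEq κ] {F : ℝ → Matrix ι κ ℝ} {A : ℤ →₀ Matrix κ κ ℝ}
    (hL2 : ∀ i j, MemLp (fun x => F x i j) 2)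
    (hOrth : ∀ k : ℤ, matInner F (fun x => F (x + k)) = if k = 0 then 1 else 0)
    (hRef : ∀ x, F x = ∑ m ∈ A.support, F (2 * x - m) * A m) (k : ℤ) :
    maskCorrelation A (2 * k) = if k = 0 then 2 else 0 := by
  have hdilate : ∀ (b : ℝ) i j, MemLp (fun x => F (2 * x - b) i j) 2 := fun b i j => by
    simpa only [sub_eq_add_neg] using (hL2 i j).comp_mul_add two_ne_zero (-b)
  have hshift : (fun x => F (x + k)) = fun x => ∑ n ∈ A.support, F (2 * x - (n - 2 * k)) * A n :=
    funext fun x => by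
      rw [hRef]
      exact sum_congr rfl fun n _ => by congr 2; ring
  have hpiece : ∀ m n : ℤ, matInner (fun x => F (2 * x - m)) (fun x => F (2 * x - (n - 2 * k))) =
      (2 : ℝ)⁻¹ • if m + 2 * k - n = 0 then 1 else 0 := fun m n => by
    -- substitute `y = 2x - m`
    rw [← hOrth, show (2 : ℝ)⁻¹ = |(2 : ℝ)⁻¹| by norm_num, ← matInner_comp_mul_add _ _ 2 (-m)]
    congr 1; funext x; congr 1; push_cast; ring
  have hhalf : (if k = 0 then 1 else 0 : Matrix κ κ ℝ) = (2 : ℝ)⁻¹ • maskCorrelation A (2 * k) :=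
    calc (if k = 0 then 1 else 0 : Matrix κ κ ℝ)
        = matInner (fun x => ∑ m ∈ A.support, F (2 * x - m) * A m)
            (fun x => ∑ n ∈ A.support, F (2 * x - (n - 2 * k)) * A n) :=
          (hOrth k).symm.trans (congrArg₂ matInner (funext hRef) hshift)
      _ = ∑ m ∈ A.support, ∑ n ∈ A.support, (A m)ᵀ *
            matInner (fun x => F (2 * x - m)) (fun x => F (2 * x - (n - 2 * k))) * A n :=
          matInner_sum_mul_sum_mul _ _ _ _ fun m n =>
            integrable_transpose_mul_apply (hdilate m) (hdilate (n - 2 * k))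
      _ = (2 : ℝ)⁻¹ • maskCorrelation A (2 * k) := by
          refine (sum_congr rfl fun m _ => sum_congr rfl fun n _ => ?_).trans
            (sum_transpose_mul_smul_ite_mul A _ _)
          rw [hpiece]
  rw [eq_comm, inv_smul_eq_iff₀ two_ne_zero] at hhalf
  rw [hhalf]
  split_ifs
  · rw [two_smul, one_add_one_eq_two]
  · exact smul_zero _

end Mask

section Symbol

variable {r : ℕ} (A : ℤ →₀ Matrix (Fin r) (Fin r) ℝ)

theorem mSharp_mul_mSymbol_eq_sum {z : ℂ} (hz : z ≠ 0) :
    mSharp A z * mSymbol A z =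
      ∑ m ∈ A.support, ∑ n ∈ A.support, z ^ (n - m) • ((A m)ᵀ * A n).map Complex.ofReal := by
  rw [mSharp, mSymbol, mSymbol, transpose_sum, Finset.sum_mul]
  refine sum_congr rfl fun m _ => ?_
  rw [Finset.mul_sum]
  refine sum_congr rfl fun n _ => ?_
  rw [transpose_smul, smul_mul_smul_comm, _root_.inv_zpow, ← _root_.zpow_neg, ← zpow_add₀ hz,
    neg_add_eq_sub]
  congr 1
  ext i j
  simp [mul_apply]

theorem mSharp_mul_mSymbol_eq_sum_maskCorrelation {z : ℂ} (hz : z ≠ 0) {D : Finset ℤ}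
    (hD : ∀ m ∈ A.support, ∀ n ∈ A.support, n - m ∈ D) :
    mSharp A z * mSymbol A z = ∑ d ∈ D, z ^ d • (maskCorrelation A d).map Complex.ofReal := by
  have hreindex : ∀ m ∈ A.support,
      ∑ n ∈ A.support, z ^ (n - m) • ((A m)ᵀ * A n).map Complex.ofReal =
        ∑ d ∈ D, z ^ d • ((A m)ᵀ * A (m + d)).map Complex.ofReal := by
    intro m hm
    have himage : A.support.image (· - m) ⊆ D := by
      intro d hd
      obtain ⟨n, hn, rfl⟩ := mem_image.1 hd
      exact hD m hm n hn
    rw [← sum_subset himage, sum_image fun n _ n' _ h => sub_left_injective h]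
    · simp only [add_sub_cancel]
    · intro d _ hd
      have : A (m + d) = 0 := Finsupp.notMem_support_iff.1 fun h =>
        hd (mem_image.2 ⟨m + d, h, add_sub_cancel_left m d⟩)
      simp [this]
  rw [mSharp_mul_mSymbol_eq_sum A hz, sum_congr rfl hreindex, sum_comm]
  refine sum_congr rfl fun d _ => ?_
  rw [← smul_sum, maskCorrelation]
  congr 1
  ext i j
  simp [Matrix.sum_apply]

theorem mSharp_mul_mSymbol_add_neg_eq_four
    (hA : ∀ k, maskCorrelation A (2 * k) = if k = 0 then 2 else 0) {z : ℂ} (hz : z ≠ 0) :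
    mSharp A z * mSymbol A z + mSharp A (-z) * mSymbol A (-z) = 4 := by
  set D := insert 0 (image₂ (· - ·) A.support A.support)
  have hD : ∀ m ∈ A.support, ∀ n ∈ A.support, n - m ∈ D := fun m hm n hn =>
    mem_insert_of_mem (mem_image₂_of_mem hn hm)
  rw [mSharp_mul_mSymbol_eq_sum_maskCorrelation A hz hD,
    mSharp_mul_mSymbol_eq_sum_maskCorrelation A (neg_ne_zero.2 hz) hD, ← sum_add_distrib,
    sum_eq_single_of_mem 0 (mem_insert_self _ _)]
  · have h0 : maskCorrelation A 0 = 2 := by simpa using hA 0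
    rw [zpow_zero, zpow_zero, one_smul, h0, Matrix.map_ofNat Complex.ofReal_zero,
      diagonal_add, ← diagonal_ofNat]
    norm_num
  · intro d _ hd
    obtain ⟨k, rfl | rfl⟩ := Int.even_or_odd' d
    · have hk : k ≠ 0 := by rintro rfl; simp at hd
      simp [hA k, hk]
    · rw [(odd_two_mul_add_one k).neg_zpow, neg_smul, add_neg_cancel]

end Symbol

/-- If a refinable square-integrable matrix function has orthonormal integer translates,
then its mask symbol satisfies the first QMF condition on the unit circle. -/
theorem orthonormal_refinable_implies_QMF {r : ℕ}
    (F : ℝ → Matrix (Fin r) (Fin r) ℝ)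
    (A : ℤ →₀ Matrix (Fin r) (Fin r) ℝ)
    (hL2 : ∀ i j : Fin r, MemLp (fun x => F x i j) 2 volume)
    (hOrth : ∀ k : ℤ, ∀ i j : Fin r,
      (∫ x : ℝ, ((F x)ᵀ * F (x + (k : ℝ))) i j) =
        (if k = 0 then (1 : Matrix (Fin r) (Fin r) ℝ) else 0) i j)
    (hRef : ∀ x : ℝ, F x = ∑ m ∈ A.support, F (2 * x - (m : ℝ)) * A m) :
    ∀ z : ℂ, ‖z‖ = 1 →
      mSharp A z * mSymbol A z + mSharp A (-z) * mSymbol A (-z) = 4 := by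
  intro z hz
  have hz0 : z ≠ 0 := by
    rintro rfl
    simp at hz
  exact mSharp_mul_mSymbol_add_neg_eq_four A
    (maskCorrelation_two_mul hL2 (fun k => Matrix.ext (hOrth k)) hRef) hz0
end
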